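/- Let k and ℓ be integers with 3 ≤ k ≤ ℓ and let H_{k,ℓ} be the graph described in the context. Then every dominating set of H_{k,ℓ} that contains none of the vertices u, v, w has at least k+ℓ−2 vertices. -/

import Mathlib

/-- The three special vertices `u`, `v`, `w`. -/
inductive UVW : Type
  | u | v | w
deriving DecidableEq

/-- Vertices of `H_{k,ℓ}`: triangle vertices `t_{i,j}` as `Sum.inl (i,j)`
(0-indexed, `i : Fin (k+ℓ-2)`, `j : Fin 3`), plus `u`, `v`, `w`. -/
abbrev HklV (k l : ℕ) := (Fin (k + l - 2) × Fin 3) ⊕ UVW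

/-- Edge relation of `H_{k,ℓ}`: triangles on each `t_{i,·}`; the edge `uv`;
`u` adjacent to `t_{i,1}` (0-indexed `j = 0`) for all `i` and to `t_{i,2}`,
`t_{i,3}` for `i ≥ k` (0-indexed `k-1 ≤ i.val`); `v` adjacent to `t_{i,1}`,
`t_{i,2}` for all `i` and to `t_{i,3}` for `i ≥ k`; `w` adjacent to `t_{i,1}`,
`t_{i,2}` for all `i` and to `t_{i,3}` for `i ≤ k-1` (0-indexed
`i.val < k-1`); `w` adjacent to neither `u` nor `v`. -/
def HklRel (k l : ℕ) : HklV k l → HklV k l → Prop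
  | .inl p, .inl q => p.1 = q.1
  | .inr .u, .inl p =>
      p.2.val = 0 ∨ (k - 1 ≤ p.1.val ∧ (p.2.val = 1 ∨ p.2.val = 2))
  | .inr .v, .inl p =>
      p.2.val = 0 ∨ p.2.val = 1 ∨ (k - 1 ≤ p.1.val ∧ p.2.val = 2)
  | .inr .w, .inl p =>
      p.2.val = 0 ∨ p.2.val = 1 ∨ (p.1.val < k - 1 ∧ p.2.val = 2)
  | .inr .u, .inr .v => True
  | _, _ => False

/-- The graph `H_{k,ℓ}`. -/
def Hkl (k l : ℕ) : SimpleGraph (HklV k l) := SimpleGraph.fromRel (HklRel k l)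

/-- `D` is a dominating set of `G`. -/
def IsDomSet {V : Type*} (G : SimpleGraph V) (D : Finset V) : Prop :=
  ∀ v : V, v ∉ D → ∃ d ∈ D, G.Adj v d

/-! The vertex `t_{i,1}` is adjacent to nothing outside its own triangle except `u`, `v`, `w`,
so a dominating set avoiding `u`, `v`, `w` meets each of the `k + ℓ - 2` disjoint triangles. -/

lemma IsDomSet.exists_mem_eq_or_adj {V : Type*} {G : SimpleGraph V} {D : Finset V}
    (hD : IsDomSet G D) (x : V) : ∃ d ∈ D, d = x ∨ G.Adj x d := by
  by_cases hx : x ∈ D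
  · exact ⟨x, hx, Or.inl rfl⟩
  · obtain ⟨d, hd, hadj⟩ := hD x hx
    exact ⟨d, hd, Or.inr hadj⟩

lemma Hkl_adj_inl_inl {k l : ℕ} {p q : Fin (k + l - 2) × Fin 3} :
    (Hkl k l).Adj (.inl p) (.inl q) ↔ p ≠ q ∧ p.1 = q.1 := by
  simp only [Hkl, SimpleGraph.fromRel_adj, HklRel, ne_eq, Sum.inl.injEq, eq_comm (a := q.1),
    or_self]

lemma Hkl_exists_mem_triangle {k l : ℕ} {D : Finset (HklV k l)} (hD : IsDomSet (Hkl k l) D)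
    (hu : (Sum.inr UVW.u : HklV k l) ∉ D) (hv : (Sum.inr UVW.v : HklV k l) ∉ D)
    (hw : (Sum.inr UVW.w : HklV k l) ∉ D) (i : Fin (k + l - 2)) :
    ∃ j : Fin 3, (Sum.inl (i, j) : HklV k l) ∈ D := by
  obtain ⟨d, hd, hdx⟩ := hD.exists_mem_eq_or_adj (.inl (i, 0))
  match d, hdx with
  | .inl q, hdx =>
    have hq : q.1 = i := by
      rcases hdx with h | h
      · rw [Sum.inl.injEq] at h
        rw [h]
      · exact ((Hkl_adj_inl_inl.mp h).2).symm
    exact ⟨q.2, by rwa [← hq]⟩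
  | .inr .u, _ => exact absurd hd hu
  | .inr .v, _ => exact absurd hd hv
  | .inr .w, _ => exact absurd hd hw

theorem stmt14_general (k l : ℕ)
    (D : Finset (HklV k l)) (hD : IsDomSet (Hkl k l) D)
    (hu : (Sum.inr UVW.u : HklV k l) ∉ D)
    (hv : (Sum.inr UVW.v : HklV k l) ∉ D)
    (hw : (Sum.inr UVW.w : HklV k l) ∉ D) :
    k + l - 2 ≤ D.card := by
  choose f hf using Hkl_exists_mem_triangle hD hu hv hw
  have hinj : Set.InjOn (fun i => (Sum.inl (i, f i) : HklV k l)) Set.univ := by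
    intro a _ b _ hab
    simp only [Sum.inl.injEq, Prod.mk.injEq] at hab
    exact hab.1
  calc k + l - 2 = (Finset.univ : Finset (Fin (k + l - 2))).card := by simp
    _ ≤ D.card := Finset.card_le_card_of_injOn _ (fun i _ => hf i) (by simpa using hinj)

/-- Every dominating set of `H_{k,ℓ}` containing none of `u`, `v`, `w` has at
least `k+ℓ-2` vertices. -/
theorem stmt14 (k l : ℕ) (hk : 3 ≤ k) (hkl : k ≤ l)
    (D : Finset (HklV k l)) (hD : IsDomSet (Hkl k l) D)
    (hu : (Sum.inr UVW.u : HklV k l) ∉ D)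
    (hv : (Sum.inr UVW.v : HklV k l) ∉ D)
    (hw : (Sum.inr UVW.w : HklV k l) ∉ D) :
    k + l - 2 ≤ D.card :=
  stmt14_general k l D hD hu hv hw
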